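/- Let S be a λ-set, κ a regular cardinal such that λ(η,S) ≠ κ for all η ∈ S_i, and G : S → κ a function. Then there is a sub-λ-set S¹ ≤ S and an ordinal γ < κ such that G(η) < γ for every η ∈ S¹. -/

import Mathlib

open Set

namespace Sh521

/-- Finite sequences of ordinals. -/
abbrev Seq := List Ordinal

/-- `W(η,S) = { i : η⌢⟨i⟩ ∈ S }`. -/
def Wset (S : Set Seq) (η : Seq) : Set Ordinal := {i | η ++ [i] ∈ S}

/-- `λ(η,S) = sup W(η,S)`. -/
noncomputable def lamOf (S : Set Seq) (η : Seq) : Ordinal := sSup (Wset S η)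

/-- An ordinal which is a regular uncountable cardinal. -/
def IsRegUncountable (o : Ordinal) : Prop :=
  ∃ κ : Cardinal, κ.IsRegular ∧ Cardinal.aleph0 < κ ∧ o = κ.ord

/-- `C` is unbounded below `κ`. -/
def UnboundedBelow (C : Set Ordinal) (κ : Ordinal) : Prop :=
  ∀ α < κ, ∃ β ∈ C, α ≤ β ∧ β < κ

/-- `C` is closed below `κ`: any limit ordinal `< κ` which is approached by members
of `C` belongs to `C`. -/
def ClosedBelow (C : Set Ordinal) (κ : Ordinal) : Prop :=
  ∀ δ < κ, Order.IsSuccLimit δ → (∀ β < δ, ∃ γ ∈ C, β ≤ γ ∧ γ < δ) → δ ∈ C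

/-- `C` is a stationary subset of `κ`: it meets every club of `κ`. -/
def StationaryBelow (C : Set Ordinal) (κ : Ordinal) : Prop :=
  ∀ D : Set Ordinal, ClosedBelow D κ → UnboundedBelow D κ → (C ∩ D).Nonempty

/-- Definition 3.1: `S` is a `λ`-set: a nonempty set of strictly decreasing finite
sequences of ordinals `< λ`, closed under initial segments, such that whenever
`W(η,S) ≠ ∅`, `λ(η,S)` is a regular uncountable cardinal and `W(η,S)` is stationary
in it; and `λ(⟨⟩,S) = λ`. -/
def IsLambdaSet (lam : Ordinal) (S : Set Seq) : Prop :=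
  S.Nonempty ∧
  (∀ η ∈ S, List.Chain' (fun a b => a > b) η) ∧
  (∀ η ∈ S, ∀ i ∈ η, i < lam) ∧
  (∀ η ∈ S, ∀ ν : Seq, ν <+: η → ν ∈ S) ∧
  (∀ η ∈ S, (Wset S η).Nonempty →
    IsRegUncountable (lamOf S η) ∧ StationaryBelow (Wset S η) (lamOf S η)) ∧
  lamOf S [] = lam

/-- The final elements of `S`. -/
def Sf (S : Set Seq) : Set Seq := {η | η ∈ S ∧ Wset S η = ∅}

/-- The initial elements of `S`. -/
def Si (S : Set Seq) : Set Seq := S \ Sf S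

/-- `S¹ ≤ S²` : `S¹` is a sub-`λ`-set of `S²`. -/
def SubLambdaSet (S1 S2 : Set Seq) : Prop :=
  S1 ⊆ S2 ∧ ∀ η ∈ S1, lamOf S1 η = lamOf S2 η

end Sh521

/-!
Induction along the tree, which is well founded because its sequences decrease: every `η ∈ S`
carries a pruning above `η` (a subtree rooted at `η` keeping the cardinals `λ(μ,S)` and stationary
successor sets) on which `G` is bounded below `κ`. At a node with `ν = λ(η,S)`, let `γᵢ < κ` bound
the pruning above `η ⌢ ⟨i⟩`. If `ν < κ`, then `sup γᵢ < κ` by regularity of `κ`. If `ν > κ`, the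
stationary set `W(η,S)` is the union of the fewer than `ν` sets `{i | γᵢ ≤ γ}`, `γ < κ`, so one of
them is stationary, hence unbounded in `ν`. Grafting the prunings above the surviving successors
onto `η` gives the pruning at `η`; at the root this is the required sub-`λ`-set.
-/
namespace Sh521

open Cardinal Order

universe u

section Stationary

variable {c : Ordinal} {C D : Set Ordinal}

theorem closedBelow_iff_dirSupClosed :
    ClosedBelow D c ↔ DirSupClosed (Subtype.val ⁻¹' D : Set (Iio c)) := by
  rw [dirSupClosed_iff_of_linearOrder]
  constructor
  · intro hD d hdD ⟨x₀, hx₀⟩ a ha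
    by_cases had : a ∈ d
    · exact hdD had
    have happ : ∀ b < a.1, ∃ x ∈ d, b < x.1 ∧ x.1 < a.1 := fun b hb =>
      ha.exists_between' had (b := ⟨b, hb.trans a.2⟩) hb
    have hx₀a : x₀ < a := (ha.1 hx₀).lt_of_ne fun h => had (h ▸ hx₀)
    refine hD a.1 a.2 ⟨not_isMin_of_lt (show x₀.1 < a.1 from hx₀a),
      isSuccPrelimit_of_succ_lt fun b hb => ?_⟩ fun b hb => ?_
    · obtain ⟨x, -, hbx, hxa⟩ := happ b hb
      exact (succ_le_of_lt hbx).trans_lt hxa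
    · obtain ⟨x, hxd, hbx, hxa⟩ := happ b hb
      exact ⟨x.1, hdD hxd, hbx.le, hxa⟩
  · intro hD δ hδc hδ happ
    set d : Set (Iio c) := {x | x.1 ∈ D ∧ x.1 < δ}
    have hlub : IsLUB d ⟨δ, hδc⟩ := by
      refine ⟨fun x hx => hx.2.le, fun b hb => not_lt.1 fun hbδ => ?_⟩
      obtain ⟨γ, hγD, hbγ, hγδ⟩ := happ _ (hδ.succ_lt hbδ)
      exact ((lt_succ b.1).trans_le hbγ).not_ge (hb (a := ⟨γ, hγδ.trans hδc⟩) ⟨hγD, hγδ⟩)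
    obtain ⟨x, hxD, -, hxδ⟩ := happ 0 hδ.bot_lt
    exact hD (d := d) (fun _ hy => hy.1) ⟨⟨x, hxδ.trans hδc⟩, hxD, hxδ⟩ hlub

theorem unboundedBelow_iff_isCofinal :
    UnboundedBelow D c ↔ IsCofinal (Subtype.val ⁻¹' D : Set (Iio c)) :=
  ⟨fun hD x => let ⟨β, hβD, hxβ, hβc⟩ := hD x.1 x.2; ⟨⟨β, hβc⟩, hβD, hxβ⟩,
    fun hD α hα => let ⟨y, hyD, hαy⟩ := hD ⟨α, hα⟩; ⟨y.1, hyD, hαy, y.2⟩⟩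

theorem isClub_preimage_iff :
    IsClub (Subtype.val ⁻¹' D : Set (Iio c)) ↔ ClosedBelow D c ∧ UnboundedBelow D c := by
  rw [isClub_iff, closedBelow_iff_dirSupClosed, unboundedBelow_iff_isCofinal]

theorem stationaryBelow_iff_isStationary :
    StationaryBelow C c ↔ IsStationary (Subtype.val ⁻¹' C : Set (Iio c)) := by
  constructor
  · intro hC t ht
    rw [← Subtype.val_injective.preimage_image t, isClub_preimage_iff] at ht
    obtain ⟨_, hxC, y, hyt, rfl⟩ := hC _ ht.1 ht.2
    exact ⟨y, hxC, hyt⟩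
  · intro hC E hEc hEu
    obtain ⟨y, hyC, hyE⟩ := hC (isClub_preimage_iff.2 ⟨hEc, hEu⟩)
    exact ⟨y.1, hyC, hyE⟩

theorem StationaryBelow.unboundedBelow (h : StationaryBelow C c) : UnboundedBelow C c := by
  intro α hα
  have hclosed : ClosedBelow (Ico α c) c := fun δ hδc hδ happ =>
    let ⟨_, ⟨hαγ, _⟩, _, hγδ⟩ := happ 0 hδ.bot_lt
    ⟨hαγ.trans hγδ.le, hδc⟩
  have hunbdd : UnboundedBelow (Ico α c) c := fun β hβ =>
    ⟨max α β, ⟨le_max_left α β, max_lt hα hβ⟩, le_max_right α β, max_lt hα hβ⟩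
  obtain ⟨β, hβC, hαβ, hβc⟩ := h _ hclosed hunbdd
  exact ⟨β, hβC, hαβ, hβc⟩

theorem StationaryBelow.sSup_eq (h : StationaryBelow C c) (hc : IsSuccLimit c)
    (hCc : C ⊆ Iic c) : sSup C = c := by
  refine (csSup_le' hCc).antisymm (le_of_forall_lt fun α hα => ?_)
  obtain ⟨β, hβC, hαβ, -⟩ := h.unboundedBelow _ (hc.succ_lt hα)
  exact (lt_succ α).trans_le (hαβ.trans (le_csSup ⟨c, hCc⟩ hβC))

theorem StationaryBelow.exists_stationaryBelow_le {ν : Cardinal.{u}} (hν : ν.IsRegular)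
    (hν₀ : ℵ₀ < ν) {W : Set Ordinal} (hW : StationaryBelow W ν.ord) {κ : Ordinal}
    (hκ : κ < ν.ord) {g : Ordinal → Ordinal} (hg : ∀ i ∈ W, g i < κ) :
    ∃ γ < κ, StationaryBelow {i ∈ W | g i ≤ γ} ν.ord := by
  have hcof : Order.cof (Iio ν.ord) = lift.{u + 1} ν := by
    rw [Ordinal.cof_Iio, ← Ordinal.lift_cof, hν.cof_ord]
  have hunion : (Subtype.val ⁻¹' W : Set (Iio ν.ord)) =
      ⋃ γ : Iio κ, Subtype.val ⁻¹' {i ∈ W | g i ≤ γ} := by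
    ext i
    simp only [mem_preimage, mem_iUnion]
    exact ⟨fun hi => ⟨⟨g i, hg i hi⟩, hi, le_rfl⟩, fun ⟨_, hi, _⟩ => hi⟩
  rw [stationaryBelow_iff_isStationary, hunion, isStationary_iUnion_iff] at hW
  · obtain ⟨γ, hγ⟩ := hW
    exact ⟨γ, γ.2, stationaryBelow_iff_isStationary.2 hγ⟩
  · rw [hcof]
    simpa using hν₀.ne'
  · rw [hcof, lift_id, lift_id, mk_Iio_ordinal, lift_lt]
    exact lt_ord.1 hκ

end Stationary

theorem exists_lt_ord_forall_le {κ : Cardinal.{u}} (hκ : κ.IsRegular) {o : Ordinal.{u}}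
    (ho : o < κ.ord) {s : Set Ordinal.{u}} (hs : s ⊆ Iio o) {f : Ordinal → Ordinal}
    (hf : ∀ i ∈ s, f i < κ.ord) : ∃ γ < κ.ord, ∀ i ∈ s, f i ≤ γ := by
  refine ⟨⨆ i : s, f i, Ordinal.lift_iSup_lt_of_lt_cof ?_ fun i => hf i i.2,
    fun i hi => le_ciSup (f := fun i : s => f i) ⟨κ.ord, ?_⟩ ⟨i, hi⟩⟩
  · rw [← Ordinal.lift_cof, hκ.cof_ord, lift_id'.{u, u + 1}]
    calc #s ≤ #(Iio o) := mk_le_mk_of_subset hs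
      _ < lift.{u + 1} κ := by rw [mk_Iio_ordinal, lift_lt]; exact lt_ord.1 ho
  · rintro _ ⟨i, rfl⟩
    exact (hf i i.2).le

theorem eq_of_append_singleton_prefix {α : Type*} {l l' : List α} {a b : α}
    (ha : l ++ [a] <+: l') (hb : l ++ [b] <+: l') : a = b := by
  have h := (List.prefix_of_prefix_length_le ha hb (by simp)).eq_of_length (by simp)
  simpa using h

structure IsPruningAbove (S T : Set Seq) (η : Seq) : Prop where
  subset : T ⊆ S
  root_mem : η ∈ T
  prefix_of_mem : ∀ μ ∈ T, η <+: μ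
  mem_of_prefix : ∀ μ ∈ T, ∀ ρ, η <+: ρ → ρ <+: μ → ρ ∈ T
  lamOf_eq : ∀ μ ∈ T, lamOf T μ = lamOf S μ
  stationaryBelow : ∀ μ ∈ T, (Wset T μ).Nonempty → StationaryBelow (Wset T μ) (lamOf T μ)

theorem IsPruningAbove.isLambdaSet {lam : Ordinal} {S T : Set Seq} (hS : IsLambdaSet lam S)
    (hT : IsPruningAbove S T []) : IsLambdaSet lam T := by
  obtain ⟨-, hchain, hlt, -, hreg, hroot⟩ := hS
  refine ⟨⟨[], hT.root_mem⟩, fun μ hμ => hchain μ (hT.subset hμ), fun μ hμ => hlt μ (hT.subset hμ),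
    fun μ hμ ρ hρ => hT.mem_of_prefix μ hμ ρ ρ.nil_prefix hρ,
    fun μ hμ hW => ⟨?_, hT.stationaryBelow μ hμ hW⟩, (hT.lamOf_eq [] hT.root_mem).trans hroot⟩
  rw [hT.lamOf_eq μ hμ]
  exact (hreg μ (hT.subset hμ) (hW.mono fun i hi => hT.subset hi)).1

def graft (η : Seq) (W : Set Ordinal) (F : Ordinal → Set Seq) : Set Seq :=
  insert η (⋃ i ∈ W, F i)

section Graft

variable {S : Set Seq} {η μ : Seq} {W : Set Ordinal} {F : Ordinal → Set Seq}

theorem mem_graft : μ ∈ graft η W F ↔ μ = η ∨ ∃ i ∈ W, μ ∈ F i := by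
  simp [graft]

theorem Wset_graft_self (hF : ∀ i ∈ W, IsPruningAbove S (F i) (η ++ [i])) :
    Wset (graft η W F) η = W := by
  ext j
  simp only [Wset, mem_ofPred_eq, mem_graft]
  constructor
  · rintro (h | ⟨i, hi, hj⟩)
    · simp at h
    · rwa [← eq_of_append_singleton_prefix ((hF i hi).prefix_of_mem _ hj) List.prefix_rfl]
  · exact fun hj => Or.inr ⟨j, hj, (hF j hj).root_mem⟩

theorem Wset_graft_of_mem (hF : ∀ i ∈ W, IsPruningAbove S (F i) (η ++ [i])) {i : Ordinal}
    (hi : i ∈ W) (hμ : μ ∈ F i) : Wset (graft η W F) μ = Wset (F i) μ := by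
  have hiμ := (hF i hi).prefix_of_mem μ hμ
  ext j
  simp only [Wset, mem_ofPred_eq, mem_graft]
  constructor
  · rintro (h | ⟨i', hi', hj⟩)
    · have hlen := hiμ.length_le
      rw [← h] at hlen
      simp at hlen
    · rwa [eq_of_append_singleton_prefix ((hF i' hi').prefix_of_mem _ hj)
        (hiμ.trans (List.prefix_append μ [j]))] at hj
  · exact fun hj => Or.inr ⟨i, hi, hj⟩

theorem isPruningAbove_graft (hη : η ∈ S) (hF : ∀ i ∈ W, IsPruningAbove S (F i) (η ++ [i]))
    (hsup : sSup W = lamOf S η) (hst : W.Nonempty → StationaryBelow W (lamOf S η)) :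
    IsPruningAbove S (graft η W F) η := by
  have hlamOf : ∀ μ ∈ graft η W F, lamOf (graft η W F) μ = lamOf S μ := by
    intro μ hμ
    rcases mem_graft.1 hμ with rfl | ⟨i, hi, hμ⟩
    · exact (congrArg sSup (Wset_graft_self hF)).trans hsup
    · exact (congrArg sSup (Wset_graft_of_mem hF hi hμ)).trans ((hF i hi).lamOf_eq μ hμ)
  refine ⟨fun μ hμ => ?_, mem_insert η _, fun μ hμ => ?_, fun μ hμ ρ hηρ hρμ => ?_, hlamOf,
    fun μ hμ => ?_⟩
  · rcases mem_graft.1 hμ with rfl | ⟨i, hi, hμ⟩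
    · exact hη
    · exact (hF i hi).subset hμ
  · rcases mem_graft.1 hμ with rfl | ⟨i, hi, hμ⟩
    · exact List.prefix_rfl
    · exact (List.prefix_append η [i]).trans ((hF i hi).prefix_of_mem μ hμ)
  · have hρη : ρ <+: η → ρ ∈ graft η W F := fun h =>
      hηρ.eq_of_length (hηρ.length_le.antisymm h.length_le) ▸ mem_insert η _
    rcases mem_graft.1 hμ with rfl | ⟨i, hi, hμ⟩
    · exact hρη hρμ
    rcases List.prefix_or_prefix_of_prefix hρμ ((hF i hi).prefix_of_mem μ hμ) with h | h
    · rcases List.prefix_concat_iff.1 h with rfl | h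
      · exact mem_graft.2 (Or.inr ⟨i, hi, (hF i hi).root_mem⟩)
      · exact hρη h
    · exact mem_graft.2 (Or.inr ⟨i, hi, (hF i hi).mem_of_prefix μ hμ ρ h hρμ⟩)
  · rw [hlamOf μ hμ]
    rcases mem_graft.1 hμ with rfl | ⟨i, hi, hμ⟩
    · rw [Wset_graft_self hF]
      exact hst
    · rw [Wset_graft_of_mem hF hi hμ, ← (hF i hi).lamOf_eq μ hμ]
      exact (hF i hi).stationaryBelow μ hμ

end Graft

section LambdaSet

variable {lam : Ordinal.{u}} {S : Set Seq.{u}} {η : Seq.{u}}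

theorem Wset_subset_Iic_lamOf (hS : IsLambdaSet lam S) : Wset S η ⊆ Iic (lamOf S η) :=
  let ⟨_, _, hlt, _⟩ := hS
  fun _ hi => le_csSup ⟨lam, fun j hj => (hlt _ hj j (by simp)).le⟩ hi

theorem lt_getLastD_of_mem_Wset (hS : IsLambdaSet lam S) {i : Ordinal} (hi : i ∈ Wset S η) :
    i < η.getLastD lam := by
  obtain ⟨-, hchain, hlt, -⟩ := hS
  rcases η.eq_nil_or_concat with rfl | ⟨η, a, rfl⟩
  · exact hlt _ hi i (by simp)
  · have := (List.isChain_append.1 (hchain _ hi)).2.2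
    simpa using this

theorem exists_subset_Wset_bounded (hS : IsLambdaSet lam S) (hη : η ∈ S) {κ : Cardinal.{u}}
    (hκ : κ.IsRegular) (hne : (Wset S η).Nonempty → lamOf S η ≠ κ.ord) {f : Ordinal → Ordinal}
    (hf : ∀ i ∈ Wset S η, f i < κ.ord) :
    ∃ W ⊆ Wset S η, sSup W = lamOf S η ∧ (W.Nonempty → StationaryBelow W (lamOf S η)) ∧
      ∃ γ < κ.ord, ∀ i ∈ W, f i ≤ γ := by
  have hκlim := isSuccLimit_ord hκ.aleph0_le
  have hle := Wset_subset_Iic_lamOf hS (η := η)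
  rcases (Wset S η).eq_empty_or_nonempty with hW | hW
  · refine ⟨∅, empty_subset _, by rw [lamOf, hW], fun h => absurd h not_nonempty_empty, 0,
      hκlim.bot_lt, fun _ h => h.elim⟩
  obtain ⟨-, -, -, -, hreg, -⟩ := hS
  obtain ⟨⟨ν, hν, hν₀, hνη⟩, hst⟩ := hreg η hη hW
  have hνκ := hne hW
  rw [hνη] at hst hle hνκ ⊢
  rcases hνκ.lt_or_gt with hlt | hgt
  · obtain ⟨γ, hγ, hfγ⟩ := exists_lt_ord_forall_le hκ (hκlim.succ_lt hlt)
      (fun i hi => mem_Iio.2 (lt_succ_of_le (hle hi))) hf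
    exact ⟨Wset S η, subset_rfl, hνη, fun _ => hst, γ, hγ, hfγ⟩
  · obtain ⟨γ, hγ, hstγ⟩ := hst.exists_stationaryBelow_le hν hν₀ hgt hf
    exact ⟨_, sep_subset _ _, hstγ.sSup_eq (isSuccLimit_ord hν.aleph0_le)
      ((sep_subset _ _).trans hle), fun _ => hstγ, γ, hγ, fun i hi => hi.2⟩

theorem exists_isPruningAbove_bounded (hS : IsLambdaSet lam S) {κ : Cardinal.{u}}
    (hκ : κ.IsRegular) (hne : ∀ η ∈ Si S, lamOf S η ≠ κ.ord) {G : Seq → Ordinal}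
    (hG : ∀ η ∈ S, G η < κ.ord) (hη : η ∈ S) :
    ∃ T, IsPruningAbove S T η ∧ ∃ γ < κ.ord, ∀ μ ∈ T, G μ ≤ γ := by
  induction hlast : η.getLastD lam using WellFoundedLT.induction generalizing η with
  | _ o ih =>
  have hchild : ∀ i ∈ Wset S η, ∃ T, IsPruningAbove S T (η ++ [i]) ∧
      ∃ γ < κ.ord, ∀ μ ∈ T, G μ ≤ γ := fun i hi =>
    ih i (hlast ▸ lt_getLastD_of_mem_Wset hS hi) hi (by simp)
  choose! F hF γ hγ hGγ using hchild
  obtain ⟨W, hWS, hsup, hst, γ₀, hγ₀, hγW⟩ := exists_subset_Wset_bounded hS hη hκ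
    (fun hW => hne η ⟨hη, fun h => hW.ne_empty h.2⟩) hγ
  refine ⟨graft η W F, isPruningAbove_graft hη (fun i hi => hF i (hWS hi)) hsup hst,
    max γ₀ (G η), max_lt hγ₀ (hG η hη), fun μ hμ => ?_⟩
  rcases mem_graft.1 hμ with rfl | ⟨i, hi, hμ⟩
  · exact le_max_right _ _
  · exact ((hGγ i (hWS hi) μ hμ).trans (hγW i hi)).trans (le_max_left _ _)

end LambdaSet

/-- Claim 3.2(3). If `S` is a `λ`-set, `κ` regular with
`λ(η,S) ≠ κ` for all `η ∈ S_i`, and `G : S → κ`, then there is a sub-`λ`-set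
`S¹ ≤ S` and `γ < κ` with `G(η) < γ` for every `η ∈ S¹`. -/
theorem bounded_on_sub_lambdaSet (lam : Ordinal) (S : Set Seq) (hS : IsLambdaSet lam S)
    (κ : Cardinal) (hκ : κ.IsRegular) (hne : ∀ η ∈ Si S, lamOf S η ≠ κ.ord)
    (G : Seq → Ordinal) (hG : ∀ η ∈ S, G η < κ.ord) :
    ∃ S1 : Set Seq, IsLambdaSet lam S1 ∧ SubLambdaSet S1 S ∧
      ∃ γ : Ordinal, γ < κ.ord ∧ ∀ η ∈ S1, G η < γ := by
  have hnil : [] ∈ S :=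
    let ⟨⟨η, hη⟩, _, _, hpre, _⟩ := hS
    hpre η hη [] η.nil_prefix
  obtain ⟨T, hT, γ, hγ, hGγ⟩ := exists_isPruningAbove_bounded hS hκ hne hG hnil
  exact ⟨T, hT.isLambdaSet hS, ⟨hT.subset, hT.lamOf_eq⟩, succ γ,
    (isSuccLimit_ord hκ.aleph0_le).succ_lt hγ, fun η hη => lt_succ_iff.2 (hGγ η hη)⟩

end Sh521
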